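/- Let N ≥ 11 be an integer and let p > p_c. Then p·β < (N−2)²/4; in particular there exists ε > 0 such that (p+ε)·β ≤ (N−2)²/4. -/
import Mathlib


noncomputable section

/-- The Joseph–Lundgren exponent for `N ≥ 11`. -/
def pJL (N : ℕ) : ℝ :=
  (((N : ℝ) - 2) ^ 2 - 4 * N + 8 * Real.sqrt ((N : ℝ) - 1)) /
    (((N : ℝ) - 2) * ((N : ℝ) - 10))

/-- `β(p, N) = (2/(p-1)) (N - 2 - 2/(p-1))`. -/
def betaC (p : ℝ) (N : ℕ) : ℝ := 2 / (p - 1) * ((N : ℝ) - 2 - 2 / (p - 1))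

/-- For `N ≥ 11` and `p > p_c` one has `p β < (N-2)²/4`; in
particular there exists `ε > 0` with `(p+ε) β ≤ (N-2)²/4`. -/
theorem p_beta_lt_hardy_constant (N : ℕ) (hN : 11 ≤ N) (p : ℝ)
    (hp : pJL N < p) :
    p * betaC p N < ((N : ℝ) - 2) ^ 2 / 4 ∧
      ∃ ε : ℝ, 0 < ε ∧ (p + ε) * betaC p N ≤ ((N : ℝ) - 2) ^ 2 / 4 := by
  have hn : (11:ℝ) ≤ (N:ℝ) := by exact_mod_cast hN
  set n : ℝ := (N:ℝ) with hndef
  set s := Real.sqrt (n - 1) with hsdef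
  have hs0 : 0 ≤ s := Real.sqrt_nonneg _
  have hs2 : s ^ 2 = n - 1 := Real.sq_sqrt (by linarith)
  have hs3 : 3 < s := by nlinarith
  have hd : 0 < n - 4 - 2 * s := by
    nlinarith [mul_pos (show (0:ℝ) < s - 3 by linarith) (show (0:ℝ) < s + 1 by linarith)]
  have h1 : (n - 2) ≠ 0 := by intro h; linarith [h]
  have h2 : (n - 10) ≠ 0 := by intro h; linarith [h]
  have key : pJL N = 1 + 4 / (n - 4 - 2 * s) := by
    unfold pJL
    rw [← hndef, ← hsdef]
    field_simp
    ring_nf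
    nlinarith [hs2]
  have hu : 0 < p - 1 := by
    have hpos : 0 < 4 / (n - 4 - 2 * s) := by positivity
    rw [key] at hp
    linarith
  set t := 2 / (p - 1) with htdef
  have ht0 : 0 < t := by positivity
  have htmul : t * (p - 1) = 2 := div_mul_cancel₀ 2 (ne_of_gt hu)
  have h4 : 4 < (p - 1) * (n - 4 - 2 * s) := by
    rw [key] at hp
    exact (div_lt_iff₀ hd).mp (by linarith)
  have ht1 : t < (n - 4 - 2 * s) / 2 := by
    rw [htdef, div_lt_div_iff₀ hu (by norm_num : (0:ℝ) < 2)]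
    nlinarith
  have hbeta : betaC p N = t * (n - 2 - t) := rfl
  have hpt : p * t = t + 2 := by linear_combination htmul
  have hmain : p * betaC p N < (n - 2) ^ 2 / 4 := by
    rw [hbeta]
    have expand : p * (t * (n - 2 - t)) = (t + 2) * (n - 2 - t) := by
      rw [show p * (t * (n - 2 - t)) = (p * t) * (n - 2 - t) by ring, hpt]
    rw [expand]
    nlinarith [mul_pos (show 0 < (n - 4 - 2*s)/2 - t by linarith)
      (show 0 < (n - 4 + 2*s)/2 - t by linarith), hs2]
  have hb0 : 0 < betaC p N := by
    rw [hbeta]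
    have : t < n - 2 := by linarith
    exact mul_pos ht0 (by linarith)
  refine ⟨hmain, ((n - 2) ^ 2 / 4 - p * betaC p N) / betaC p N,
    div_pos (by linarith) hb0, ?_⟩
  rw [add_mul, div_mul_cancel₀ _ (ne_of_gt hb0)]
  linarith
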